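/- arXiv:1310.3879 — 8 statements merged into one kernel-verified Lean document; each statement's English description precedes it below -/
import Mathlib

section
/- If a and b are integers satisfying a ≥ b > 1, then (a+1)^(a+1) · (b-1)^(b-1) > a^a · b^b. -/
/-!
The sequence `n ↦ n ^ n` is strictly log-convex: with `x = (n + 1) ^ 2 = n (n + 2) + 1`,
Bernoulli's inequality `x ^ n (x - n) ≤ x (x - 1) ^ n` gives
`((n + 1) ^ (n + 1)) ^ 2 < n ^ n (n + 2) ^ (n + 2)`. Hence the ratios `(n + 1) ^ (n + 1) / n ^ n`
strictly increase, and the claim compares this ratio at `b - 1` with the one at `a`.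
-/

theorem mul_lt_mul_of_sq_lt_mul {R : Type*} [CommSemiring R] [LinearOrder R]
    [IsStrictOrderedRing R] {f : ℕ → R} (hpos : ∀ n, 0 < f n)
    (hconv : ∀ n, f (n + 1) ^ 2 < f n * f (n + 2)) {i j : ℕ} (hij : i < j) :
    f (i + 1) * f j < f i * f (j + 1) := by
  induction j, hij using Nat.le_induction with
  | base => simpa [sq] using hconv i
  | succ j _ ih =>
    have hprod : f (i + 1) * f j * f (j + 1) ^ 2 < f i * f (j + 1) * (f j * f (j + 2)) :=
      mul_lt_mul'' ih (hconv j) (mul_pos (hpos _) (hpos _)).le (pow_pos (hpos _) 2).le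
    refine lt_of_mul_lt_mul_right (a := f j * f (j + 1)) ?_ (mul_pos (hpos _) (hpos _)).le
    calc f (i + 1) * f (j + 1) * (f j * f (j + 1)) = f (i + 1) * f j * f (j + 1) ^ 2 := by ring
      _ < f i * f (j + 1) * (f j * f (j + 2)) := hprod
      _ = f i * f (j + 1 + 1) * (f j * f (j + 1)) := by ring

theorem pow_mul_sub_le_mul_sub_one_pow {R : Type*} [CommRing R] [LinearOrder R]
    [IsStrictOrderedRing R] {x : R} (hx : 1 ≤ 2 * x) (n : ℕ) :
    x ^ n * (x - n) ≤ x * (x - 1) ^ n := by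
  cases n with
  | zero => simp
  | succ m =>
    have hx0 : 0 ≤ x := by linarith
    have bernoulli := pow_add_mul_le_add_pow (b := -1) hx0 (by linarith) (m + 1)
    calc x ^ (m + 1) * (x - (m + 1 : ℕ)) = x * (x ^ (m + 1) + (m + 1 : ℕ) * x ^ m * -1) := by
          ring
      _ ≤ x * (x + -1) ^ (m + 1) := mul_le_mul_of_nonneg_left bernoulli hx0
      _ = x * (x - 1) ^ (m + 1) := by ring

theorem sq_pow_self_lt (n : ℕ) :
    (((n : ℤ) + 1) ^ (n + 1)) ^ 2 < (n : ℤ) ^ n * ((n : ℤ) + 2) ^ (n + 2) := by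
  set x : ℤ := ((n : ℤ) + 1) ^ 2 with hx
  have hx_pos : 0 < x := by positivity
  refine lt_of_mul_lt_mul_left (a := x) ?_ hx_pos.le
  calc x * (((n : ℤ) + 1) ^ (n + 1)) ^ 2 = x ^ n * x ^ 2 := by
        rw [← pow_mul, mul_comm (n + 1), pow_mul, ← hx]; ring
    _ < x ^ n * ((x - n) * ((n : ℤ) + 2) ^ 2) := by
        gcongr
        rw [hx]
        nlinarith [(Nat.cast_nonneg n : (0 : ℤ) ≤ n)]
    _ ≤ x * (x - 1) ^ n * ((n : ℤ) + 2) ^ 2 := by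
        rw [← mul_assoc]
        exact mul_le_mul_of_nonneg_right (pow_mul_sub_le_mul_sub_one_pow (by omega) n)
          (by positivity)
    _ = x * ((n : ℤ) ^ n * ((n : ℤ) + 2) ^ (n + 2)) := by
        rw [show x - 1 = (n : ℤ) * (n + 2) by rw [hx]; ring, mul_pow]
        ring

/-- If `a` and `b` are integers satisfying `a ≥ b > 1`, then
`(a+1)^(a+1) * (b-1)^(b-1) > a^a * b^b`. -/
theorem exp_switch (a b : ℤ) (hb : 1 < b) (hab : b ≤ a) :
    a ^ a.toNat * b ^ b.toNat < (a + 1) ^ (a + 1).toNat * (b - 1) ^ (b - 1).toNat := by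
  obtain ⟨i, rfl⟩ : ∃ i : ℕ, b = i + 1 := ⟨(b - 1).toNat, by omega⟩
  obtain ⟨j, rfl⟩ : ∃ j : ℕ, a = j := ⟨a.toNat, by omega⟩
  have hij : i < j := by omega
  have key := mul_lt_mul_of_sq_lt_mul (f := fun n : ℕ ↦ (n : ℤ) ^ n)
    (fun n ↦ by rcases n with _ | n <;> positivity)
    (fun n ↦ by push_cast; exact_mod_cast sq_pow_self_lt n) hij
  have e₁ : ((j : ℤ) + 1).toNat = j + 1 := by omega
  have e₂ : ((i : ℤ) + 1).toNat = i + 1 := by omega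
  simp only [Int.toNat_natCast, e₁, e₂, add_sub_cancel_right]
  push_cast at key
  linarith
end

section
/- Let a and b be real numbers with a ≥ b > 1. Then the function f(x) = (a+x)^(a+x) · (b−x)^(b−x) is strictly increasing on the interval [0,1]; in particular, for all 0 ≤ x < y ≤ 1 one has (a+x)^(a+x)(b−x)^(b−x) < (a+y)^(a+y)(b−y)^(b−y). -/
open Real Set

/-!
Taking logarithms, `f = exp ∘ g` with `g x = φ (a + x) + φ (b - x)` and `φ t = t log t`.
Since `φ' t = log t + 1`, we get `g' x = log (a + x) - log (b - x)`, which is positive for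
`0 < x < b` because `b - x < b ≤ a < a + x`.
-/

theorem hasDerivAt_mul_log_add_mul_log_sub {a b x : ℝ} (hax : a + x ≠ 0) (hbx : b - x ≠ 0) :
    HasDerivAt (fun x => (a + x) * log (a + x) + (b - x) * log (b - x))
      (log (a + x) - log (b - x)) x := by
  have hplus := (hasDerivAt_mul_log hax).comp x ((hasDerivAt_id x).const_add a)
  have hminus := (hasDerivAt_mul_log hbx).comp x ((hasDerivAt_id x).const_sub b)
  exact (hplus.add hminus).congr_deriv (by ring)

theorem strictMonoOn_mul_log_add_mul_log_sub {a b : ℝ} (hab : b ≤ a) :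
    StrictMonoOn (fun x => (a + x) * log (a + x) + (b - x) * log (b - x)) (Ico 0 b) := by
  refine strictMonoOn_of_hasDerivWithinAt_pos (convex_Ico 0 b)
    (f' := fun x => log (a + x) - log (b - x))
    ((continuous_const.add continuous_id).mul_log.add
      (continuous_const.sub continuous_id).mul_log).continuousOn
    (fun x hx => ?_) (fun x hx => ?_)
  all_goals rw [interior_Ico] at hx; obtain ⟨hx0, hxb⟩ := hx
  · exact (hasDerivAt_mul_log_add_mul_log_sub (by linarith) (by linarith)).hasDerivWithinAt
  · have hlt : b - x < a + x := by linarith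
    linarith [log_lt_log (by linarith) hlt]

theorem strictMonoOn_rpow_self_mul_rpow_self {a b : ℝ} (hab : b ≤ a) :
    StrictMonoOn (fun x => (a + x) ^ (a + x) * (b - x) ^ (b - x)) (Ico 0 b) := by
  have hexp : EqOn (fun x => (a + x) ^ (a + x) * (b - x) ^ (b - x))
      (exp ∘ fun x => (a + x) * log (a + x) + (b - x) * log (b - x)) (Ico 0 b) := by
    rintro x ⟨hx0, hxb⟩
    simp only [Function.comp_apply, exp_add, rpow_def_of_pos (by linarith : 0 < a + x),
      rpow_def_of_pos (by linarith : 0 < b - x), mul_comm (log _)]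
  exact (exp_strictMono.comp_strictMonoOn (strictMonoOn_mul_log_add_mul_log_sub hab)).congr
    hexp.symm

/-- For real `a ≥ b > 1`, the function `x ↦ (a+x)^(a+x) * (b-x)^(b-x)` (real powers)
is strictly increasing on `[0,1]`; in particular for `0 ≤ x < y ≤ 1` the stated strict
inequality holds. -/
theorem strictMonoOn_rpow_prod (a b : ℝ) (hb : 1 < b) (hab : b ≤ a) :
    StrictMonoOn (fun x : ℝ => (a + x) ^ (a + x) * (b - x) ^ (b - x)) (Icc 0 1) ∧
      ∀ x y : ℝ, 0 ≤ x → x < y → y ≤ 1 →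
        (a + x) ^ (a + x) * (b - x) ^ (b - x) < (a + y) ^ (a + y) * (b - y) ^ (b - y) := by
  have hmono : StrictMonoOn (fun x : ℝ => (a + x) ^ (a + x) * (b - x) ^ (b - x)) (Icc 0 1) :=
    (strictMonoOn_rpow_self_mul_rpow_self hab).mono (Icc_subset_Ico_right hb)
  exact ⟨hmono, fun x y hx hxy hy => hmono ⟨hx, hxy.le.trans hy⟩ ⟨hx.trans hxy.le, hy⟩ hxy⟩
end

section
/- Fix an integer m ≥ 1, nonzero complex numbers A_1, …, A_m, and a complex number s. Then there are only finitely many tuples (k_1, k_2, …, k_m) of even integers with 4 ≤ k_1 < k_2 < ⋯ < k_m such that A_1·C_{k_1} + A_2·C_{k_2} + ⋯ + A_m·C_{k_m} = s. -/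
/-- The `q`-coefficient constant of the weight `k` Eisenstein series:
`C_k = (2πi)^k / ((k-1)! ζ(k))`. -/
noncomputable def eisC (k : ℕ) : ℂ :=
  (2 * Real.pi * Complex.I) ^ k / ((Nat.factorial (k - 1) : ℂ) * riemannZeta k)

/-!
The constants decay superexponentially: `|C_{k+1}| / |C_k| = (2π / k) · |ζ(k) / ζ(k+1)| → 0`.
Hence in `∑ A_i C_{k_i} = s` the term with the smallest index dominates all the others once
`k_1` is large, which pins `‖s‖` between `|A_1 C_{k_1}| / 2` and `3 |A_1 C_{k_1}| / 2`.
For large `k_1` this is impossible both when `s = 0` (the head is nonzero) and when `s ≠ 0`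
(the head tends to `0`). So `k_1` is bounded, and induction on `m` bounds the remaining indices,
with `s` replaced by `s - A_1 C_{k_1}`.
-/

open Filter Topology

section RatioDecay

variable {𝕜 E ι : Type*} [NormedField 𝕜] [NormedAddCommGroup E] [NormedSpace 𝕜 E] {c : ℕ → E}

lemma tendsto_zero_of_norm_ratio_tendsto_zero (hc : ∀ᶠ n in atTop, c n ≠ 0)
    (hratio : Tendsto (fun n ↦ ‖c (n + 1)‖ / ‖c n‖) atTop (𝓝 0)) :
    Tendsto c atTop (𝓝 0) := by
  have hsum : Summable (fun n ↦ ‖c n‖) :=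
    summable_of_ratio_test_tendsto_lt_one zero_lt_one
      (hc.mono fun _ h ↦ norm_ne_zero_iff.2 h) (by simpa only [norm_norm] using hratio)
  exact tendsto_zero_iff_norm_tendsto_zero.2 hsum.tendsto_atTop_zero

lemma eventually_forall_lt_norm_le_mul (hc : ∀ᶠ n in atTop, c n ≠ 0)
    (hratio : Tendsto (fun n ↦ ‖c (n + 1)‖ / ‖c n‖) atTop (𝓝 0)) {ε : ℝ} (hε : 0 < ε) :
    ∀ᶠ n in atTop, ∀ j, n < j → ‖c j‖ ≤ ε * ‖c n‖ := by
  obtain ⟨N, hN⟩ := eventually_atTop.1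
    (hc.and (hratio.eventually (ge_mem_nhds (lt_min hε one_pos))))
  have step : ∀ i, N ≤ i → ‖c (i + 1)‖ ≤ min ε 1 * ‖c i‖ := fun i hi ↦
    (div_le_iff₀ (norm_pos_iff.2 (hN i hi).1)).1 (hN i hi).2
  filter_upwards [eventually_ge_atTop N] with n hn j hj
  induction j, hj using Nat.le_induction with
  | base => exact (step n hn).trans (by gcongr; exact min_le_left _ _)
  | succ j hj ih =>
    calc ‖c (j + 1)‖ ≤ min ε 1 * ‖c j‖ := step j (by omega)
      _ ≤ ‖c j‖ := mul_le_of_le_one_left (norm_nonneg _) (min_le_right _ _)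
      _ ≤ ε * ‖c n‖ := ih

lemma eventually_norm_sum_smul_le [Fintype ι] (hc : ∀ᶠ n in atTop, c n ≠ 0)
    (hratio : Tendsto (fun n ↦ ‖c (n + 1)‖ / ‖c n‖) atTop (𝓝 0)) (A : ι → 𝕜) {ε : ℝ}
    (hε : 0 < ε) :
    ∀ᶠ n in atTop, ∀ k : ι → ℕ, (∀ i, n < k i) → ‖∑ i, A i • c (k i)‖ ≤ ε * ‖c n‖ := by
  set M := ∑ i, ‖A i‖
  have hM : 0 ≤ M := by positivity
  filter_upwards [eventually_forall_lt_norm_le_mul hc hratio (div_pos hε (by linarith : 0 < M + 1))]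
    with n hn k hk
  calc ‖∑ i, A i • c (k i)‖ ≤ ∑ i, ‖A i‖ * (ε / (M + 1) * ‖c n‖) := by
        refine (norm_sum_le _ _).trans (Finset.sum_le_sum fun i _ ↦ ?_)
        rw [norm_smul]
        gcongr
        exact hn (k i) (hk i)
    _ = M / (M + 1) * (ε * ‖c n‖) := by rw [← Finset.sum_mul]; ring
    _ ≤ ε * ‖c n‖ :=
        mul_le_of_le_one_left (by positivity) ((div_le_one (by linarith)).2 (by linarith))

lemma eventually_norm_notMem_Icc {a : ℝ} (ha : 0 < a) (hc : ∀ᶠ n in atTop, c n ≠ 0)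
    (hratio : Tendsto (fun n ↦ ‖c (n + 1)‖ / ‖c n‖) atTop (𝓝 0)) (s : E) :
    ∀ᶠ n in atTop, ‖s‖ ∉ Set.Icc (a / 2 * ‖c n‖) (3 * a / 2 * ‖c n‖) := by
  rcases eq_or_ne s 0 with rfl | hs
  · filter_upwards [hc] with n hn
    rw [norm_zero]
    exact Set.notMem_Icc_of_lt (mul_pos (half_pos ha) (norm_pos_iff.2 hn))
  · have hlim : Tendsto (fun n ↦ 3 * a / 2 * ‖c n‖) atTop (𝓝 0) := by
      simpa using ((tendsto_zero_of_norm_ratio_tendsto_zero hc hratio).norm).const_mul (3 * a / 2)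
    filter_upwards [hlim.eventually (gt_mem_nhds (norm_pos_iff.2 hs))] with n hn
    exact Set.notMem_Icc_of_gt hn

lemma exists_bound_head_of_sum_smul_eq {m : ℕ} (hc : ∀ᶠ n in atTop, c n ≠ 0)
    (hratio : Tendsto (fun n ↦ ‖c (n + 1)‖ / ‖c n‖) atTop (𝓝 0)) (A : Fin (m + 1) → 𝕜)
    (hA : A 0 ≠ 0) (s : E) :
    ∃ B, ∀ k : Fin (m + 1) → ℕ, StrictMono k → ∑ i, A i • c (k i) = s → k 0 < B := by
  have ha : 0 < ‖A 0‖ := norm_pos_iff.2 hA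
  obtain ⟨B, hB⟩ := eventually_atTop.1 <|
    (eventually_norm_sum_smul_le hc hratio (fun i : Fin m ↦ A i.succ) (half_pos ha)).and
      (eventually_norm_notMem_Icc ha hc hratio s)
  refine ⟨B, fun k hk hsum ↦ not_le.1 fun hkB ↦ ?_⟩
  obtain ⟨htail_le, hwindow⟩ := hB (k 0) hkB
  have htail : ‖s - A 0 • c (k 0)‖ ≤ ‖A 0‖ / 2 * ‖c (k 0)‖ := by
    rw [← hsum, Fin.sum_univ_succ, add_sub_cancel_left]
    exact htail_le (fun i ↦ k i.succ) fun i ↦ hk (Fin.succ_pos i)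
  have hhead : ‖A 0 • c (k 0)‖ = ‖A 0‖ * ‖c (k 0)‖ := norm_smul _ _
  have h₁ := norm_sub_norm_le s (A 0 • c (k 0))
  have h₂ := norm_sub_norm_le (A 0 • c (k 0)) s
  rw [norm_sub_rev] at h₂
  exact hwindow ⟨by linarith, by linarith⟩

theorem finite_setOf_strictMono_sum_smul_eq (hc : ∀ᶠ n in atTop, c n ≠ 0)
    (hratio : Tendsto (fun n ↦ ‖c (n + 1)‖ / ‖c n‖) atTop (𝓝 0)) {m : ℕ} (A : Fin m → 𝕜)
    (hA : ∀ i, A i ≠ 0) (s : E) :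
    {k : Fin m → ℕ | StrictMono k ∧ ∑ i, A i • c (k i) = s}.Finite := by
  induction m generalizing s with
  | zero => exact Set.toFinite _
  | succ m ih =>
    obtain ⟨B, hB⟩ := exists_bound_head_of_sum_smul_eq hc hratio A (hA 0) s
    refine ((Set.finite_Iio B).biUnion (t := fun j ↦ Fin.cons j ''
        {t : Fin m → ℕ | StrictMono t ∧ ∑ i, A i.succ • c (t i) = s - A 0 • c j}) fun j _ ↦
      (ih (fun i ↦ A i.succ) (fun i ↦ hA i.succ) _).image _).subset ?_
    rintro k ⟨hk, hsum⟩
    refine Set.mem_biUnion (hB k hk hsum)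
      ⟨Fin.tail k, ⟨hk.comp Fin.strictMono_succ, ?_⟩, Fin.cons_self_tail k⟩
    rw [← hsum, Fin.sum_univ_succ, add_sub_cancel_left]
    rfl

end RatioDecay

open Complex
open scoped Real

lemma tendsto_riemannZeta_natCast_atTop : Tendsto (fun n : ℕ ↦ riemannZeta n) atTop (𝓝 1) := by
  have hreal : Tendsto (fun x : ℝ ↦ riemannZeta x) atTop (𝓝 1) := by
    refine (LSeries.tendsto_atTop (f := 1) ?_).congr' ?_
    · rw [LSeries.abscissaOfAbsConv_one]
      exact EReal.coe_lt_top 1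
    · filter_upwards [eventually_gt_atTop 1] with x hx
      exact LSeries_one_eq_riemannZeta (by simpa using hx)
  simpa only [Function.comp_def, ofReal_natCast] using hreal.comp tendsto_natCast_atTop_atTop

lemma riemannZeta_natCast_ne_zero {n : ℕ} (hn : 2 ≤ n) : riemannZeta n ≠ 0 :=
  riemannZeta_ne_zero_of_one_lt_re (by rw [natCast_re]; exact_mod_cast hn)

lemma eisC_ne_zero {n : ℕ} (hn : 2 ≤ n) : eisC n ≠ 0 := by
  have hbase : (2 * (π : ℂ) * I) ≠ 0 := by simp [Real.pi_ne_zero]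
  exact div_ne_zero (pow_ne_zero _ hbase)
    (mul_ne_zero (Nat.cast_ne_zero.2 (Nat.factorial_ne_zero _)) (riemannZeta_natCast_ne_zero hn))

lemma eisC_succ {n : ℕ} (hn : 2 ≤ n) :
    eisC (n + 1) = 2 * π * I / n * (riemannZeta n / riemannZeta (n + 1 : ℕ)) * eisC n := by
  obtain ⟨j, rfl⟩ := Nat.exists_eq_add_of_le' (by omega : 1 ≤ n)
  have h₁ := riemannZeta_natCast_ne_zero hn
  have h₂ := riemannZeta_natCast_ne_zero (by omega : 2 ≤ j + 1 + 1)
  unfold eisC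
  rw [Nat.add_sub_cancel, Nat.add_sub_cancel, Nat.factorial_succ]
  push_cast at h₁ h₂ ⊢
  field_simp
  ring

lemma tendsto_norm_eisC_succ_div_norm_eisC :
    Tendsto (fun n ↦ ‖eisC (n + 1)‖ / ‖eisC n‖) atTop (𝓝 0) := by
  have hzeta := tendsto_riemannZeta_natCast_atTop
  have hratio : Tendsto (fun n : ℕ ↦ 2 * π * I / n * (riemannZeta n / riemannZeta (n + 1 : ℕ)))
      atTop (𝓝 0) := by
    simpa using (tendsto_const_div_atTop_nhds_zero_nat (2 * π * I)).mul
      (hzeta.div (hzeta.comp (tendsto_add_atTop_nat 1)) one_ne_zero)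
  refine (tendsto_zero_iff_norm_tendsto_zero.1 hratio).congr' ?_
  filter_upwards [eventually_ge_atTop 2] with n hn
  rw [eisC_succ hn, norm_mul (_ * _) (eisC n),
    mul_div_cancel_right₀ _ (norm_ne_zero_iff.2 (eisC_ne_zero hn))]

theorem finitely_many_eisC_relations_general (m : ℕ) (A : Fin m → ℂ)
    (hA : ∀ i, A i ≠ 0) (s : ℂ) :
    {k : Fin m → ℕ | (∀ i, Even (k i) ∧ 4 ≤ k i) ∧ StrictMono k ∧
      ∑ i, A i * eisC (k i) = s}.Finite := by
  have hne : ∀ᶠ n in atTop, eisC n ≠ 0 := (eventually_ge_atTop 2).mono fun _ ↦ eisC_ne_zero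
  refine (finite_setOf_strictMono_sum_smul_eq hne tendsto_norm_eisC_succ_div_norm_eisC
    A hA s).subset ?_
  rintro k ⟨-, hk, hsum⟩
  exact ⟨hk, hsum⟩

/-- For fixed nonzero `A_1, …, A_m ∈ ℂ` and fixed `s ∈ ℂ`, there are only finitely many
tuples `(k_1 < k_2 < ⋯ < k_m)` of even integers `≥ 4` with
`A_1 C_{k_1} + ⋯ + A_m C_{k_m} = s`. -/
theorem finitely_many_eisC_relations (m : ℕ) (hm : 1 ≤ m) (A : Fin m → ℂ)
    (hA : ∀ i, A i ≠ 0) (s : ℂ) :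
    {k : Fin m → ℕ | (∀ i, Even (k i) ∧ 4 ≤ k i) ∧ StrictMono k ∧
      ∑ i, A i * eisC (k i) = s}.Finite :=
  finitely_many_eisC_relations_general m A hA s
end

section
/- Fix positive integers n and m. There exists a real number B(n,m), depending only on n and m, such that for every tuple of even integers k_1, …, k_m with each k_i ≥ 4, the n-th coefficient of the Cauchy convolution e_{k_1} ∗ e_{k_2} ∗ ⋯ ∗ e_{k_m} satisfies |(e_{k_1} ∗ ⋯ ∗ e_{k_m})(n)| ≤ B(n,m). -/
/-- The `q`-expansion of the normalized weight `k` Eisenstein series, as a formal power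
series: constant coefficient `1`, and `n`-th coefficient `C_k σ_{k-1}(n)` for `n ≥ 1`. -/
noncomputable def eisPS (k : ℕ) : PowerSeries ℂ :=
  PowerSeries.mk fun n => if n = 0 then 1 else eisC k * ∑ d ∈ n.divisors, (d : ℂ) ^ (k - 1)

/-!
Each factor has `j`-th coefficient of size at most `(2π)^k j^k / (k-1)!` since `|ζ(k)| ≥ 1`,
and for `j ≤ n` this is `2πn · (2πn)^(k-1)/(k-1)! ≤ 2πn · e^(2πn)`, uniformly in `k`.
The `n`-th coefficient of the product is a sum over the finitely many ways to write `n` as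
`m` ordered parts, each term a product of `m` such coefficients.
-/

open PowerSeries ArithmeticFunction
open scoped ArithmeticFunction.sigma

theorem PowerSeries.norm_coeff_prod_le {ι R : Type*} [DecidableEq ι] [NormedCommRing R]
    [NormOneClass R] (s : Finset ι) (f : ι → PowerSeries R) (n : ℕ) {C : ℝ}
    (hC : ∀ i ∈ s, ∀ j ≤ n, ‖coeff j (f i)‖ ≤ C) :
    ‖coeff n (∏ i ∈ s, f i)‖ ≤ (s.finsuppAntidiag n).card * C ^ s.card := by
  rw [coeff_prod, ← nsmul_eq_mul, ← Finset.sum_const]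
  refine (norm_sum_le _ _).trans (Finset.sum_le_sum fun l hl => ?_)
  obtain ⟨hsum, -⟩ := Finset.mem_finsuppAntidiag.mp hl
  have hl_le : ∀ i ∈ s, l i ≤ n := fun i hi =>
    hsum ▸ Finset.single_le_sum (fun j _ => Nat.zero_le (l j)) hi
  calc ‖∏ i ∈ s, coeff (l i) (f i)‖ ≤ ∏ i ∈ s, ‖coeff (l i) (f i)‖ := s.norm_prod_le _
    _ ≤ ∏ _i ∈ s, C :=
      Finset.prod_le_prod (fun _ _ => norm_nonneg _) fun i hi => hC i hi _ (hl_le i hi)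
    _ = C ^ s.card := Finset.prod_const C

theorem one_le_norm_riemannZeta_natCast {k : ℕ} (hk : 1 < k) : 1 ≤ ‖riemannZeta k‖ := by
  have hsum : Summable fun n : ℕ => 1 / (n : ℝ) ^ k := Real.summable_one_div_nat_pow.mpr hk
  have hreal : riemannZeta k = ((∑' n : ℕ, 1 / (n : ℝ) ^ k : ℝ) : ℂ) := by
    rw [zeta_nat_eq_tsum_of_gt_one hk, Complex.ofReal_tsum]
    push_cast
    rfl
  have hfirst : (1 : ℝ) ≤ ∑' n : ℕ, 1 / (n : ℝ) ^ k := by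
    simpa using hsum.le_tsum 1 fun _ _ => by positivity
  rw [hreal, Complex.norm_real, Real.norm_eq_abs]
  exact hfirst.trans (le_abs_self _)

theorem norm_eisC_le {k : ℕ} (hk : 1 < k) :
    ‖eisC k‖ ≤ (2 * Real.pi) ^ k / (k - 1).factorial := by
  have hzeta := one_le_norm_riemannZeta_natCast hk
  rw [eisC, norm_div, norm_pow, norm_mul, norm_mul, norm_mul]
  simp only [Complex.norm_two, Complex.norm_real, Complex.norm_I, mul_one, Real.norm_eq_abs,
    abs_of_pos Real.pi_pos, Complex.norm_natCast]
  gcongr (2 * Real.pi) ^ k / ?_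
  exact le_mul_of_one_le_right (Nat.cast_nonneg _) hzeta

theorem norm_coeff_eisPS_le {n k j : ℕ} (hk : 1 < k) (hj : j ≤ n) :
    ‖coeff j (eisPS k)‖ ≤ max 1 (2 * Real.pi * n * Real.exp (2 * Real.pi * n)) := by
  rw [eisPS, coeff_mk]
  split_ifs with hj0
  · simp
  refine le_max_of_le_right ?_
  have hsigma : ‖∑ d ∈ j.divisors, (d : ℂ) ^ (k - 1)‖ ≤ (n : ℝ) ^ k := by
    have hjk : σ (k - 1) j ≤ j ^ k := by
      simpa [Nat.sub_add_cancel hk.le] using sigma_le_pow_succ (k - 1) j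
    have hcast : ∑ d ∈ j.divisors, (d : ℂ) ^ (k - 1) = (σ (k - 1) j : ℂ) := by
      simp [sigma_apply]
    rw [hcast, Complex.norm_natCast]
    exact_mod_cast hjk.trans (Nat.pow_le_pow_left hj k)
  have hx : 0 ≤ 2 * Real.pi * n := by positivity
  calc ‖eisC k * ∑ d ∈ j.divisors, (d : ℂ) ^ (k - 1)‖
      ≤ (2 * Real.pi) ^ k / (k - 1).factorial * (n : ℝ) ^ k := by
        rw [norm_mul]
        exact mul_le_mul (norm_eisC_le hk) hsigma (norm_nonneg _) (by positivity)
    _ = 2 * Real.pi * n * ((2 * Real.pi * n) ^ (k - 1) / (k - 1).factorial) := by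
        obtain ⟨k, rfl⟩ := Nat.exists_eq_add_one_of_ne_zero (by omega : k ≠ 0)
        rw [Nat.add_sub_cancel]
        ring
    _ ≤ 2 * Real.pi * n * Real.exp (2 * Real.pi * n) :=
        mul_le_mul_of_nonneg_left (Real.pow_div_factorial_le_exp _ hx _) hx

theorem eis_product_coeff_bounded_general (n m : ℕ) :
    ∃ B : ℝ, ∀ k : Fin m → ℕ, (∀ i, Even (k i) ∧ 4 ≤ k i) →
      ‖PowerSeries.coeff (R := ℂ) n (∏ i, eisPS (k i))‖ ≤ B := by
  refine ⟨((Finset.univ : Finset (Fin m)).finsuppAntidiag n).card *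
    max 1 (2 * Real.pi * n * Real.exp (2 * Real.pi * n)) ^ m, fun k hk => ?_⟩
  simpa using norm_coeff_prod_le Finset.univ (fun i => eisPS (k i)) n
    fun i _ _ hj => norm_coeff_eisPS_le (by linarith [(hk i).2]) hj

/-- For fixed `n, m ≥ 1`, the `n`-th coefficient of a product (Cauchy convolution) of any
`m` Eisenstein `q`-expansions of even weights `≥ 4` is bounded by a constant `B(n,m)`
depending only on `n` and `m`. -/
theorem eis_product_coeff_bounded (n m : ℕ) (hn : 0 < n) (hm : 0 < m) :
    ∃ B : ℝ, ∀ k : Fin m → ℕ, (∀ i, Even (k i) ∧ 4 ≤ k i) →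
      ‖PowerSeries.coeff (R := ℂ) n (∏ i, eisPS (k i))‖ ≤ B :=
  eis_product_coeff_bounded_general n m
end

section
/- Let ℓ be a real number with ℓ ≥ 24. Then for every real x with 12 ≤ x ≤ ℓ − 12, one has (x/ℓ)^{x/2} · ((ℓ−x)/ℓ)^{(ℓ−x)/2} ≤ (12/ℓ)^{6} · ((ℓ−12)/ℓ)^{(ℓ−12)/2}; that is, on the interval [12, ℓ−12] the function x ↦ (x/ℓ)^{x/2}((ℓ−x)/ℓ)^{(ℓ−x)/2} is maximized at the endpoints x = 12 and x = ℓ − 12. -/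
open Real Set

/-! Taking logarithms, the claim says that `g x = x log x + (ℓ - x) log (ℓ - x)` is maximal on
`[12, ℓ - 12]` at the endpoints. This holds because `g` is convex (a sum of two copies of the
convex `t log t`) and symmetric under `x ↦ ℓ - x`, so it takes the same value at both ends. -/

lemma convexOn_mul_log_add_mul_log_sub (ℓ : ℝ) :
    ConvexOn ℝ (Icc 0 ℓ) (fun x => x * log x + (ℓ - x) * log (ℓ - x)) := by
  have hleft : ConvexOn ℝ (Icc 0 ℓ) (fun x => x * log x) :=
    convexOn_mul_log.subset Icc_subset_Ici_self (convex_Icc _ _)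
  have hright : ConvexOn ℝ (Icc 0 ℓ) (fun x => (ℓ - x) * log (ℓ - x)) := by
    refine (convexOn_mul_log.comp_affineMap (AffineMap.const ℝ ℝ ℓ - AffineMap.id ℝ ℝ)).subset
      (fun y hy => ?_) (convex_Icc _ _)
    simp only [mem_preimage, AffineMap.coe_sub, AffineMap.coe_const, AffineMap.coe_id,
      Pi.sub_apply, Function.const_apply, id_eq, mem_Ici]
    linarith [hy.2]
  exact hleft.add hright

lemma mul_log_add_mul_log_sub_le {ℓ a x : ℝ} (ha : 0 ≤ a) (hax : a ≤ x) (hxa : x ≤ ℓ - a) :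
    x * log x + (ℓ - x) * log (ℓ - x) ≤ a * log a + (ℓ - a) * log (ℓ - a) := by
  have hseg : x ∈ segment ℝ a (ℓ - a) := by
    rw [segment_eq_Icc (hax.trans hxa)]
    exact ⟨hax, hxa⟩
  have h := (convexOn_mul_log_add_mul_log_sub ℓ).le_on_segment
    ⟨ha, by linarith⟩ ⟨by linarith, by linarith⟩ hseg
  simpa only [sub_sub_cancel, add_comm ((ℓ - a) * log (ℓ - a)), max_self] using h

lemma div_rpow_mul_sub_div_rpow_eq_exp {ℓ y : ℝ} (hy : 0 < y) (hyℓ : y < ℓ) :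
    (y / ℓ) ^ (y / 2) * ((ℓ - y) / ℓ) ^ ((ℓ - y) / 2) =
      exp ((y * log y + (ℓ - y) * log (ℓ - y) - ℓ * log ℓ) / 2) := by
  have hℓ : 0 < ℓ := hy.trans hyℓ
  have hℓy : 0 < ℓ - y := sub_pos.mpr hyℓ
  rw [rpow_def_of_pos (div_pos hy hℓ), rpow_def_of_pos (div_pos hℓy hℓ), ← exp_add,
    log_div hy.ne' hℓ.ne', log_div hℓy.ne' hℓ.ne']
  ring_nf

/-- For real `ℓ ≥ 24`, the function `x ↦ (x/ℓ)^(x/2) ((ℓ-x)/ℓ)^((ℓ-x)/2)` on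
`[12, ℓ - 12]` is maximized at the endpoints `x = 12` and `x = ℓ - 12`. -/
theorem rpow_ratio_max (ℓ : ℝ) (hℓ : 24 ≤ ℓ) (x : ℝ) (hx : 12 ≤ x) (hxℓ : x ≤ ℓ - 12) :
    (x / ℓ) ^ (x / 2) * ((ℓ - x) / ℓ) ^ ((ℓ - x) / 2) ≤
      (12 / ℓ) ^ (6 : ℝ) * ((ℓ - 12) / ℓ) ^ ((ℓ - 12) / 2) := by
  rw [show (6 : ℝ) = 12 / 2 by norm_num,
    div_rpow_mul_sub_div_rpow_eq_exp (by linarith) (by linarith),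
    div_rpow_mul_sub_div_rpow_eq_exp (by norm_num) (by linarith), exp_le_exp]
  have hlog := mul_log_add_mul_log_sub_le (ℓ := ℓ) (by norm_num) hx hxℓ
  linarith
end

section
/- Let p be an odd prime, r a positive integer, and A_1, …, A_r complex numbers with S = |A_1| + ⋯ + |A_r| satisfying p > S² + S. Let ℓ be a real number, and let b_1, …, b_r and c_1, …, c_r be complex numbers satisfying |b_i| ≤ p^{ℓ/2 − 1} and |c_i| ≤ p^{ℓ − 2} for every i. Then (Σ_{i=1}^r A_i b_i)² − Σ_{i=1}^r A_i c_i ≠ p^{ℓ−1}. -/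
/-! With `S = ∑ ‖A i‖` and `q = p ^ (ℓ/2 - 1)`, the triangle inequality bounds the left-hand
side by `(S q)² + S q² = (S² + S) q²`, which is strictly less than `p q² = p ^ (ℓ - 1)`. -/

open Finset

section SeminormedRing

variable {α ι : Type*} [SeminormedRing α]

theorem norm_sum_mul_le_of_le (s : Finset ι) (A b : ι → α) {B : ℝ} (hb : ∀ i ∈ s, ‖b i‖ ≤ B) :
    ‖∑ i ∈ s, A i * b i‖ ≤ (∑ i ∈ s, ‖A i‖) * B :=
  calc ‖∑ i ∈ s, A i * b i‖ ≤ ∑ i ∈ s, ‖A i‖ * ‖b i‖ :=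
        (norm_sum_le _ _).trans (sum_le_sum fun i _ ↦ norm_mul_le _ _)
    _ ≤ ∑ i ∈ s, ‖A i‖ * B := sum_le_sum fun i hi ↦ by gcongr; exact hb i hi
    _ = (∑ i ∈ s, ‖A i‖) * B := (sum_mul ..).symm

theorem norm_sq_sub_le_of_le {x y : α} {S q : ℝ} (hx : ‖x‖ ≤ S * q) (hy : ‖y‖ ≤ S * q ^ 2) :
    ‖x ^ 2 - y‖ ≤ (S ^ 2 + S) * q ^ 2 :=
  calc ‖x ^ 2 - y‖ ≤ ‖x‖ ^ 2 + ‖y‖ :=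
        (norm_sub_le _ _).trans (by gcongr; exact norm_pow_le' x two_pos)
    _ ≤ (S * q) ^ 2 + S * q ^ 2 := by gcongr
    _ = (S ^ 2 + S) * q ^ 2 := by ring

end SeminormedRing

theorem hecke_relation_fails_general (p : ℕ)
    (r : ℕ) (A b c : Fin r → ℂ) (ℓ : ℝ)
    (hpS : (∑ i, ‖A i‖) ^ 2 + (∑ i, ‖A i‖) < (p : ℝ))
    (hb : ∀ i, ‖b i‖ ≤ (p : ℝ) ^ (ℓ / 2 - 1))
    (hc : ∀ i, ‖c i‖ ≤ (p : ℝ) ^ (ℓ - 2)) :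
    (∑ i, A i * b i) ^ 2 - ∑ i, A i * c i ≠ (((p : ℝ) ^ (ℓ - 1) : ℝ) : ℂ) := by
  have hp : (0 : ℝ) < p := lt_of_le_of_lt (by positivity) hpS
  set q := (p : ℝ) ^ (ℓ / 2 - 1)
  have hq : q ^ 2 = (p : ℝ) ^ (ℓ - 2) := by
    rw [← Real.rpow_natCast, ← Real.rpow_mul hp.le]; ring_nf
  have hbound := norm_sq_sub_le_of_le (norm_sum_mul_le_of_le univ A b fun i _ ↦ hb i)
    (norm_sum_mul_le_of_le univ A c fun i _ ↦ hq ▸ hc i)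
  have hlt : ((∑ i, ‖A i‖) ^ 2 + ∑ i, ‖A i‖) * q ^ 2 < (p : ℝ) ^ (ℓ - 1) := by
    rw [show ℓ - 1 = ℓ - 2 + 1 by ring, Real.rpow_add_one hp.ne', ← hq, mul_comm _ (p : ℝ)]
    gcongr
  intro h
  rw [h, Complex.norm_real, Real.norm_of_nonneg (by positivity)] at hbound
  exact hbound.not_gt hlt

/-- Let `p` be an odd prime, `A_1, …, A_r ∈ ℂ` with `S = ∑ |A_i|` satisfying
`p > S² + S`, and suppose `|b_i| ≤ p^(ℓ/2 - 1)` and `|c_i| ≤ p^(ℓ-2)`. Then the Hecke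
relation value `(∑ A_i b_i)² - ∑ A_i c_i` cannot equal `p^(ℓ-1)`. -/
theorem hecke_relation_fails (p : ℕ) (hp : Nat.Prime p) (hodd : Odd p)
    (r : ℕ) (hr : 0 < r) (A b c : Fin r → ℂ) (ℓ : ℝ)
    (hpS : (∑ i, ‖A i‖) ^ 2 + (∑ i, ‖A i‖) < (p : ℝ))
    (hb : ∀ i, ‖b i‖ ≤ (p : ℝ) ^ (ℓ / 2 - 1))
    (hc : ∀ i, ‖c i‖ ≤ (p : ℝ) ^ (ℓ - 2)) :
    (∑ i, A i * b i) ^ 2 - ∑ i, A i * c i ≠ (((p : ℝ) ^ (ℓ - 1) : ℝ) : ℂ) :=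
  hecke_relation_fails_general p r A b c ℓ hpS hb hc
end

section
/- For every positive integer n, σ_7(n) = σ_3(n) + 120 · Σ_{j=1}^{n−1} σ_3(j) · σ_3(n−j). -/
/-!
Liouville's elementary method. The convolution sum is the sum of `(ab)³` over the solutions of
`ax + by = n` in positive integers. The sum of a weight `f(a,b)` over these solutions can be
computed in two ways: split by the sign of `y - x` and pair `y < x` with `x < y` through
`(a,b,x,y) ↦ (b,a,y,x)`, or split by the sign of `a - b` and map `b < a` onto `x < y` by the shear
`(a,b,x,y) ↦ (a-b,b,x,y+x)`. For `f(a,b) = a²b³(b-a)`, which vanishes on `a = b`, comparing the two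
expresses `4 ∑_{x<y} (ab)³` as a sum over the diagonal `x = y`, that is over the divisors
`s = a + b` of `n`. What remains is `2 ∑ (ab)³ = ∑_{s ∣ n} s ∑_{a<s} a²(s-a)³`, and the inner sum
is `(s⁶ - s²)/60` by Faulhaber's formulas.
-/

open Finset

theorem Finset.sum_filter_lt_add_sum_filter_gt_add_sum_filter_eq {ι β M : Type*}
    [LinearOrder β] [AddCommMonoid M] (s : Finset ι) (u v : ι → β) (F : ι → M) :
    ∑ i ∈ s with u i < v i, F i + ∑ i ∈ s with v i < u i, F i + ∑ i ∈ s with u i = v i, F i =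
      ∑ i ∈ s, F i := by
  rw [← sum_filter_add_sum_filter_not s (fun i => u i < v i),
    ← sum_filter_add_sum_filter_not (s.filter fun i => ¬u i < v i) (fun i => v i < u i),
    filter_filter, filter_filter, add_assoc]
  congr 3 <;> ext i <;> simp only [mem_filter] <;> constructor <;> grind

def posSolutions (n : ℕ) : Finset ((ℕ × ℕ) × ℕ × ℕ) :=
  {q ∈ (Icc 1 n ×ˢ Icc 1 n) ×ˢ Icc 1 n ×ˢ Icc 1 n | q.1.1 * q.2.1 + q.1.2 * q.2.2 = n}

@[simp]
theorem mem_posSolutions {n a b x y : ℕ} :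
    ((a, b), x, y) ∈ posSolutions n ↔ 0 < a ∧ 0 < b ∧ 0 < x ∧ 0 < y ∧ a * x + b * y = n := by
  simp only [posSolutions, mem_filter, mem_product, mem_Icc]
  constructor
  · rintro ⟨⟨⟨⟨ha, -⟩, hb, -⟩, ⟨hx, -⟩, hy, -⟩, h⟩
    exact ⟨ha, hb, hx, hy, h⟩
  · rintro ⟨ha, hb, hx, hy, h⟩
    refine ⟨⟨⟨⟨ha, ?_⟩, hb, ?_⟩, ⟨hx, ?_⟩, hy, ?_⟩, h⟩ <;> nlinarith

section
variable {M : Type*} [AddCommMonoid M] (n : ℕ)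

theorem sum_posSolutions_filter_swap (p : (ℕ × ℕ) × ℕ × ℕ → Prop) [DecidablePred p]
    (F : (ℕ × ℕ) × ℕ × ℕ → M) :
    ∑ q ∈ posSolutions n with p q, F q =
      ∑ q ∈ posSolutions n with p (q.1.swap, q.2.swap), F (q.1.swap, q.2.swap) := by
  refine sum_nbij' (fun q => (q.1.swap, q.2.swap)) (fun q => (q.1.swap, q.2.swap)) ?_ ?_
    (fun _ _ => rfl) (fun _ _ => rfl) (fun _ _ => rfl)
  all_goals
    rintro ⟨⟨a, b⟩, x, y⟩
    simp only [mem_filter, mem_posSolutions, Prod.swap_prod_mk]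
    grind

theorem sum_posSolutions_filter_lt_shear (F : (ℕ × ℕ) × ℕ × ℕ → M) :
    ∑ q ∈ posSolutions n with q.2.1 < q.2.2, F ((q.1.1 + q.1.2, q.1.2), q.2.1, q.2.2 - q.2.1) =
      ∑ q ∈ posSolutions n with q.1.2 < q.1.1, F q := by
  refine sum_nbij' (fun q => ((q.1.1 + q.1.2, q.1.2), q.2.1, q.2.2 - q.2.1))
    (fun q => ((q.1.1 - q.1.2, q.1.2), q.2.1, q.2.2 + q.2.1)) ?_ ?_ ?_ ?_ (fun _ _ => rfl)
  all_goals
    rintro ⟨⟨a, b⟩, x, y⟩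
    simp only [mem_filter, mem_posSolutions, Prod.mk.injEq, and_true, true_and]
  · rintro ⟨⟨ha, hb, hx, hy, h⟩, hxy⟩
    have : b * (y - x) + b * x = b * y := by rw [← mul_add, Nat.sub_add_cancel hxy.le]
    refine ⟨⟨by omega, hb, hx, by omega, by nlinarith⟩, by omega⟩
  · rintro ⟨⟨ha, hb, hx, hy, h⟩, hba⟩
    have : (a - b) * x + b * x = a * x := by rw [← add_mul, Nat.sub_add_cancel hba.le]
    refine ⟨⟨by omega, hb, hx, by omega, by nlinarith⟩, by omega⟩
  all_goals omega

theorem sum_posSolutions_eq_sum_lt_add_sum_diag (f : ℕ → ℕ → M) :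
    ∑ q ∈ posSolutions n, f q.1.1 q.1.2 =
      ∑ q ∈ posSolutions n with q.2.1 < q.2.2, (f q.1.1 q.1.2 + f q.1.2 q.1.1) +
        ∑ q ∈ posSolutions n with q.2.1 = q.2.2, f q.1.1 q.1.2 := by
  rw [← sum_filter_lt_add_sum_filter_gt_add_sum_filter_eq _ (·.2.1) (·.2.2),
    sum_posSolutions_filter_swap n (fun q => q.2.2 < q.2.1), sum_add_distrib]
  simp only [Prod.fst_swap, Prod.snd_swap]

theorem sum_posSolutions_eq_sum_lt_shear_add_sum_eq (f : ℕ → ℕ → M) :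
    ∑ q ∈ posSolutions n, f q.1.1 q.1.2 =
      ∑ q ∈ posSolutions n with q.2.1 < q.2.2,
          (f (q.1.1 + q.1.2) q.1.2 + f q.1.2 (q.1.1 + q.1.2)) +
        ∑ q ∈ posSolutions n with q.1.1 = q.1.2, f q.1.1 q.1.2 := by
  rw [← sum_filter_lt_add_sum_filter_gt_add_sum_filter_eq _ (·.1.2) (·.1.1),
    sum_posSolutions_filter_swap n (fun q => q.1.1 < q.1.2)]
  simp only [Prod.fst_swap, Prod.snd_swap, eq_comm]
  rw [← sum_posSolutions_filter_lt_shear n, ← sum_posSolutions_filter_lt_shear n, sum_add_distrib]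

theorem sum_posSolutions_diag (f : ℕ → ℕ → M) :
    ∑ q ∈ posSolutions n with q.2.1 = q.2.2, f q.1.1 q.1.2 =
      ∑ s ∈ n.divisors, ∑ a ∈ Ico 1 s, f a (s - a) := by
  rw [sum_sigma']
  refine sum_nbij' (fun q => ⟨q.1.1 + q.1.2, q.1.1⟩) (fun p => ((p.2, p.1 - p.2), n / p.1, n / p.1))
    ?_ ?_ ?_ ?_ fun _ _ => by simp only [Nat.add_sub_cancel_left]
  · rintro ⟨⟨a, b⟩, x, y⟩
    simp only [mem_filter, mem_posSolutions, mem_sigma, Nat.mem_divisors, mem_Ico]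
    rintro ⟨⟨ha, hb, hx, -, h⟩, rfl⟩
    exact ⟨⟨⟨x, by rw [← h, add_mul]⟩, by rw [← h]; positivity⟩, ha, by omega⟩
  · rintro ⟨s, a⟩
    simp only [mem_filter, mem_posSolutions, mem_sigma, Nat.mem_divisors, mem_Ico]
    rintro ⟨⟨hs, hn⟩, ha, has⟩
    have hx : 0 < n / s := Nat.div_pos (Nat.le_of_dvd (Nat.pos_of_ne_zero hn) hs) (by omega)
    refine ⟨⟨ha, by omega, hx, hx, ?_⟩, trivial⟩
    rw [← add_mul, Nat.add_sub_cancel' has.le, Nat.mul_div_cancel' hs]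
  · rintro ⟨⟨a, b⟩, x, y⟩
    simp only [mem_filter, mem_posSolutions, Prod.mk.injEq]
    rintro ⟨⟨ha, hb, hx, -, h⟩, rfl⟩
    have hs : n / (a + b) = x := by
      rw [← h, ← add_mul, Nat.mul_div_cancel_left x (by omega)]
    simp only [hs, and_true, true_and]
    omega
  · rintro ⟨s, a⟩
    simp only [mem_sigma, mem_Ico, Sigma.mk.inj_iff, heq_eq_eq, and_true]
    omega
end

theorem sum_Ico_mul_sum_divisors_eq_sum_posSolutions {R : Type*} [NonUnitalNonAssocSemiring R]
    (n : ℕ) (u v : ℕ → R) :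
    ∑ j ∈ Ico 1 n, (∑ d ∈ j.divisors, u d) * ∑ e ∈ (n - j).divisors, v e =
      ∑ q ∈ posSolutions n, u q.1.1 * v q.1.2 := by
  simp only [sum_mul_sum, ← sum_product']
  rw [sum_sigma']
  refine sum_nbij' (fun p => ((p.2.1, p.2.2), p.1 / p.2.1, (n - p.1) / p.2.2))
    (fun q => ⟨q.1.1 * q.2.1, q.1⟩) ?_ ?_ ?_ ?_ (fun _ _ => rfl)
  · rintro ⟨j, d, e⟩
    simp only [mem_sigma, mem_Ico, mem_product, Nat.mem_divisors, mem_posSolutions]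
    rintro ⟨⟨hj, hjn⟩, ⟨hd, -⟩, he, -⟩
    have hd0 : 0 < d := Nat.pos_of_dvd_of_pos hd (by omega)
    have he0 : 0 < e := Nat.pos_of_dvd_of_pos he (by omega)
    refine ⟨hd0, he0, Nat.div_pos (Nat.le_of_dvd (by omega) hd) hd0,
      Nat.div_pos (Nat.le_of_dvd (by omega) he) he0, ?_⟩
    rw [Nat.mul_div_cancel' hd, Nat.mul_div_cancel' he]
    omega
  · rintro ⟨⟨a, b⟩, x, y⟩
    simp only [mem_sigma, mem_Ico, mem_product, Nat.mem_divisors, mem_posSolutions]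
    rintro ⟨ha, hb, hx, hy, h⟩
    have hby : n - a * x = b * y := by omega
    have : 0 < a * x := by positivity
    have : 0 < b * y := by positivity
    refine ⟨⟨by omega, by omega⟩, ⟨Dvd.intro x rfl, by omega⟩, ?_, by omega⟩
    rw [hby]
    exact Dvd.intro y rfl
  · rintro ⟨j, d, e⟩
    simp only [mem_sigma, mem_Ico, mem_product, Nat.mem_divisors]
    rintro ⟨-, ⟨hd, -⟩, -⟩
    simp only [Nat.mul_div_cancel' hd]
  · rintro ⟨⟨a, b⟩, x, y⟩
    simp only [mem_posSolutions]
    rintro ⟨ha, hb, -, -, h⟩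
    have hby : n - a * x = b * y := by omega
    simp only [hby, Nat.mul_div_cancel_left _ ha, Nat.mul_div_cancel_left _ hb]

theorem two_mul_sum_posSolutions_cube (n : ℕ) :
    2 * ∑ q ∈ posSolutions n, ((q.1.1 : ℤ) * q.1.2) ^ 3 =
      ∑ q ∈ posSolutions n with q.2.1 = q.2.2, (q.1.1 : ℤ) ^ 2 * q.1.2 ^ 3 * (q.1.1 + q.1.2) := by
  set f : ℕ → ℕ → ℤ := fun a b => a ^ 2 * b ^ 3 * (b - a) with hf
  have hdiag := sum_posSolutions_eq_sum_lt_add_sum_diag n f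
  have hshear := sum_posSolutions_eq_sum_lt_shear_add_sum_eq n f
  have hcube := sum_posSolutions_eq_sum_lt_add_sum_diag n fun a b => ((a : ℤ) * b) ^ 3
  have hf_shear (a b : ℕ) : f (a + b) b + f b (a + b) = f a b + f b a + 4 * ((a : ℤ) * b) ^ 3 := by
    simp only [hf]; push_cast; ring
  have hf_eq : ∑ q ∈ posSolutions n with q.1.1 = q.1.2, f q.1.1 q.1.2 = 0 :=
    sum_eq_zero fun q hq => by simp [hf, (mem_filter.1 hq).2]
  simp only [hf_shear, hf_eq, sum_add_distrib, ← mul_sum, add_zero] at hshear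
  simp only [mul_comm (_ : ℤ) _, ← two_mul, ← mul_sum] at hcube
  rw [sum_add_distrib] at hdiag
  have hweight (a b : ℕ) : (a : ℤ) ^ 2 * b ^ 3 * (a + b) = f a b + 2 * ((a : ℤ) * b) ^ 3 := by
    simp only [hf]; ring
  simp only [hweight, sum_add_distrib, ← mul_sum]
  linear_combination 2 * hcube + hdiag - hshear

theorem six_mul_sum_range_sq (s : ℕ) :
    6 * ∑ a ∈ range s, (a : ℤ) ^ 2 = s * (s - 1) * (2 * s - 1) := by
  induction s with
  | zero => simp
  | succ k ih => rw [sum_range_succ, mul_add, ih]; push_cast; ring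

theorem four_mul_sum_range_cube (s : ℕ) :
    4 * ∑ a ∈ range s, (a : ℤ) ^ 3 = s ^ 2 * (s - 1) ^ 2 := by
  induction s with
  | zero => simp
  | succ k ih => rw [sum_range_succ, mul_add, ih]; push_cast; ring

theorem thirty_mul_sum_range_pow_four (s : ℕ) :
    30 * ∑ a ∈ range s, (a : ℤ) ^ 4 = s * (s - 1) * (2 * s - 1) * (3 * s ^ 2 - 3 * s - 1) := by
  induction s with
  | zero => simp
  | succ k ih => rw [sum_range_succ, mul_add, ih]; push_cast; ring

theorem twelve_mul_sum_range_pow_five (s : ℕ) :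
    12 * ∑ a ∈ range s, (a : ℤ) ^ 5 = s ^ 2 * (s - 1) ^ 2 * (2 * s ^ 2 - 2 * s - 1) := by
  induction s with
  | zero => simp
  | succ k ih => rw [sum_range_succ, mul_add, ih]; push_cast; ring

theorem sixty_mul_sum_Ico_sq_mul_cube_sub (s : ℕ) :
    60 * ∑ a ∈ Ico 1 s, (a : ℤ) ^ 2 * ((s - a : ℕ) : ℤ) ^ 3 = s ^ 6 - s ^ 2 := by
  have hrange : ∑ a ∈ Ico 1 s, (a : ℤ) ^ 2 * ((s - a : ℕ) : ℤ) ^ 3 =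
      ∑ a ∈ range s, (a : ℤ) ^ 2 * (s - a) ^ 3 := by
    rw [range_eq_Ico]
    refine sum_subset_zero_on_sdiff (Ico_subset_Ico_left zero_le_one) (fun a ha => ?_)
      (fun a ha => by rw [Nat.cast_sub (mem_Ico.1 ha).2.le])
    obtain rfl : a = 0 := by simp only [mem_sdiff, mem_Ico] at ha; omega
    simp
  have hexpand (a : ℤ) :
      a ^ 2 * (s - a) ^ 3 = s ^ 3 * a ^ 2 - 3 * s ^ 2 * a ^ 3 + 3 * s * a ^ 4 - a ^ 5 := by
    ring
  simp only [hrange, hexpand, sum_add_distrib, sum_sub_distrib, ← mul_sum]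
  linear_combination 10 * (s : ℤ) ^ 3 * six_mul_sum_range_sq s -
    45 * (s : ℤ) ^ 2 * four_mul_sum_range_cube s + 6 * (s : ℤ) * thirty_mul_sum_range_pow_four s -
    5 * twelve_mul_sum_range_pow_five s

theorem sum_divisors_pow_seven_sub_pow_three (n : ℕ) :
    ∑ s ∈ n.divisors, ((s : ℤ) ^ 7 - s ^ 3) =
      120 * ∑ q ∈ posSolutions n, ((q.1.1 : ℤ) * q.1.2) ^ 3 := by
  rw [show (120 : ℤ) = 60 * 2 by norm_num, mul_assoc, two_mul_sum_posSolutions_cube,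
    sum_posSolutions_diag n fun a b => (a : ℤ) ^ 2 * b ^ 3 * (a + b), mul_sum]
  refine sum_congr rfl fun s _ => ?_
  have hweight : ∀ a ∈ Ico 1 s, (a : ℤ) ^ 2 * ((s - a : ℕ) : ℤ) ^ 3 * (a + (s - a : ℕ)) =
      s * ((a : ℤ) ^ 2 * ((s - a : ℕ) : ℤ) ^ 3) := fun a ha => by
    rw [← Nat.cast_add, Nat.add_sub_cancel' (mem_Ico.1 ha).2.le]; ring
  rw [sum_congr rfl hweight, ← mul_sum, mul_left_comm, sixty_mul_sum_Ico_sq_mul_cube_sub]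
  ring

theorem sigma7_identity_general (n : ℕ) :
    ∑ d ∈ n.divisors, d ^ 7 =
      (∑ d ∈ n.divisors, d ^ 3) +
        120 * ∑ j ∈ Finset.Ico 1 n,
          (∑ d ∈ j.divisors, d ^ 3) * (∑ d ∈ (n - j).divisors, d ^ 3) := by
  have key := sum_divisors_pow_seven_sub_pow_three n
  rw [sum_Ico_mul_sum_divisors_eq_sum_posSolutions]
  zify
  simp only [mul_pow, sum_sub_distrib] at key ⊢
  linarith

/-- For every positive integer `n`,
`σ_7(n) = σ_3(n) + 120 ∑_{j=1}^{n-1} σ_3(j) σ_3(n-j)`. -/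
theorem sigma7_identity (n : ℕ) (hn : 0 < n) :
    ∑ d ∈ n.divisors, d ^ 7 =
      (∑ d ∈ n.divisors, d ^ 3) +
        120 * ∑ j ∈ Finset.Ico 1 n,
          (∑ d ∈ j.divisors, d ^ 3) * (∑ d ∈ (n - j).divisors, d ^ 3) :=
  sigma7_identity_general n
end

section
/- In the ring of formal power series ℚ[[q]], the identity 691 · E₁₂ = 441 · E₄³ + 250 · E₆² holds, where E₄ = 1 + 240 Σ_{n≥1} σ_3(n) qⁿ, E₆ = 1 − 504 Σ_{n≥1} σ_5(n) qⁿ, and E₁₂ = 1 + (65520/691) Σ_{n≥1} σ_11(n) qⁿ. -/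
/-!
The coefficient of `qⁿ` in `(∑ σ_r(m) qᵐ)(∑ σ_s(m) qᵐ)` is the sum of `aʳ bˢ` over the quadruples
of positive integers with `a x + b y = n`. Liouville's method evaluates such sums elementarily.
Split the quadruples according to `x ⋚ y` and to `a ⋚ b`; the swap `(a, x) ↔ (b, y)` and the shear
`(a, x, b, y) ↦ (a - b, x, b, x + y)` identify the off-diagonal parts, so for weights `g`, `h` with
`g(a, b) + g(b, a) = h(a + b, b) + h(b, a + b)` the difference `∑ g - ∑ h` only sees the diagonals
`x = y` and `a = b`. The first is a divisor sum of power sums, which are polynomials. Suitable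
polynomial weights give `120 σ₃ ∗ σ₃ = σ₇ - σ₃` (that is, `E₄² = E₈`) and an expression of
`10080 σ₃ ∗ σ₇ + 12600 σ₅ ∗ σ₅` through `σ₁₁, σ₇, σ₅, σ₃`; expanding `E₄³` and `E₆²` with these
gives the identity.
-/

/-- The `q`-expansion of `E₄` over `ℚ`. -/
def E4 : PowerSeries ℚ :=
  PowerSeries.mk fun n => if n = 0 then 1 else 240 * ∑ d ∈ n.divisors, (d : ℚ) ^ 3

/-- The `q`-expansion of `E₆` over `ℚ`. -/
def E6 : PowerSeries ℚ :=
  PowerSeries.mk fun n => if n = 0 then 1 else -504 * ∑ d ∈ n.divisors, (d : ℚ) ^ 5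

/-- The `q`-expansion of `E₁₂` over `ℚ`. -/
def E12 : PowerSeries ℚ :=
  PowerSeries.mk fun n =>
    if n = 0 then 1 else (65520 / 691) * ∑ d ∈ n.divisors, (d : ℚ) ^ 11

open Finset PowerSeries
open scoped ArithmeticFunction.sigma

-- The quadruple `(a, x, b, y)` with `a x + b y = n` is stored as `((a, x), (b, y))`.
def divisorQuads (n : ℕ) : Finset ((ℕ × ℕ) × (ℕ × ℕ)) :=
  (antidiagonal n).biUnion fun uv => uv.1.divisorsAntidiagonal ×ˢ uv.2.divisorsAntidiagonal

theorem mem_divisorQuads {n : ℕ} {p : (ℕ × ℕ) × (ℕ × ℕ)} :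
    p ∈ divisorQuads n ↔
      p.1.1 * p.1.2 + p.2.1 * p.2.2 = n ∧ p.1.1 ≠ 0 ∧ p.1.2 ≠ 0 ∧ p.2.1 ≠ 0 ∧ p.2.2 ≠ 0 := by
  simp only [divisorQuads, mem_biUnion, HasAntidiagonal.mem_antidiagonal, mem_product,
    Nat.mem_divisorsAntidiagonal, Prod.exists]
  constructor
  · rintro ⟨u, v, rfl, ⟨rfl, hu⟩, rfl, hv⟩
    exact ⟨rfl, left_ne_zero_of_mul hu, right_ne_zero_of_mul hu, left_ne_zero_of_mul hv,
      right_ne_zero_of_mul hv⟩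
  · rintro ⟨h, ha, hx, hb, hy⟩
    exact ⟨_, _, h, ⟨rfl, mul_ne_zero ha hx⟩, rfl, mul_ne_zero hb hy⟩

def sigmaSeries (k : ℕ) : ℚ⟦X⟧ :=
  PowerSeries.mk fun n => (σ k n : ℚ)

theorem coeff_sigmaSeries (k n : ℕ) :
    coeff n (sigmaSeries k) = ∑ d ∈ n.divisors, (d : ℚ) ^ k := by
  simp [sigmaSeries, ArithmeticFunction.sigma_apply]

theorem coeff_sigmaSeries_mul (r s n : ℕ) :
    coeff n (sigmaSeries r * sigmaSeries s) =
      ∑ p ∈ divisorQuads n, (p.1.1 : ℚ) ^ r * (p.2.1 : ℚ) ^ s := by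
  have hdisj : (antidiagonal n : Set (ℕ × ℕ)).PairwiseDisjoint
      fun uv => uv.1.divisorsAntidiagonal ×ˢ uv.2.divisorsAntidiagonal := by
    intro uv _ uv' _ hne
    refine disjoint_left.2 fun p hp hp' => hne ?_
    simp only [mem_product, Nat.mem_divisorsAntidiagonal] at hp hp'
    exact Prod.ext (hp.1.1.symm.trans hp'.1.1) (hp.2.1.symm.trans hp'.2.1)
  rw [coeff_mul, divisorQuads, sum_biUnion hdisj]
  refine sum_congr rfl fun uv _ => ?_
  rw [coeff_sigmaSeries, coeff_sigmaSeries, ← Nat.sum_divisorsAntidiagonal fun d _ => (d : ℚ) ^ r,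
    ← Nat.sum_divisorsAntidiagonal fun d _ => (d : ℚ) ^ s, sum_mul_sum, sum_product]

theorem sum_divisorQuads_swap {M : Type*} [AddCommMonoid M] (n : ℕ)
    (P : (ℕ × ℕ) × (ℕ × ℕ) → Prop) [DecidablePred P] (f : (ℕ × ℕ) × (ℕ × ℕ) → M) :
    ∑ p ∈ divisorQuads n with P p, f p = ∑ p ∈ divisorQuads n with P p.swap, f p.swap := by
  refine sum_nbij' Prod.swap Prod.swap ?_ ?_ (fun _ _ => rfl) (fun _ _ => rfl) (fun _ _ => rfl)
  all_goals
    intro p hp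
    simp only [mem_filter, mem_divisorQuads, Prod.fst_swap, Prod.snd_swap, Prod.swap_swap] at hp ⊢
    grind

theorem sum_divisorQuads_shear {M : Type*} [AddCommMonoid M] (n : ℕ) (F : ℕ → ℕ → M) :
    ∑ p ∈ divisorQuads n with p.2.1 < p.1.1, F p.1.1 p.2.1 =
      ∑ p ∈ divisorQuads n with p.1.2 < p.2.2, F (p.1.1 + p.2.1) p.2.1 := by
  refine sum_nbij' (fun p => ((p.1.1 - p.2.1, p.1.2), (p.2.1, p.1.2 + p.2.2)))
    (fun p => ((p.1.1 + p.2.1, p.1.2), (p.2.1, p.2.2 - p.1.2))) ?_ ?_ ?_ ?_ ?_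
  all_goals
    rintro ⟨⟨a, x⟩, ⟨b, y⟩⟩ hp
    simp only [mem_filter, mem_divisorQuads] at hp ⊢
  · obtain ⟨⟨h, ha, hx, hb, hy⟩, hab⟩ := hp
    obtain ⟨c, rfl⟩ := Nat.exists_eq_add_of_lt hab
    refine ⟨⟨?_, by omega, hx, hb, by omega⟩, by omega⟩
    rw [← h, show b + c + 1 - b = c + 1 by omega]
    ring
  · obtain ⟨⟨h, ha, hx, hb, hy⟩, hxy⟩ := hp
    obtain ⟨c, rfl⟩ := Nat.exists_eq_add_of_lt hxy
    refine ⟨⟨?_, by omega, hx, hb, by omega⟩, by omega⟩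
    rw [← h, show x + c + 1 - x = c + 1 by omega]
    ring
  all_goals grind

theorem sum_divisorQuads_filter_eq {M : Type*} [AddCommMonoid M] (n : ℕ) (g : ℕ → ℕ → M) :
    ∑ p ∈ divisorQuads n with p.1.2 = p.2.2, g p.1.1 p.2.1 =
      ∑ e ∈ n.divisors, ∑ a ∈ Ico 1 e, g a (e - a) := by
  rw [sum_sigma']
  refine sum_nbij' (fun p => ⟨p.1.1 + p.2.1, p.1.1⟩)
    (fun q => ((q.2, n / q.1), (q.1 - q.2, n / q.1))) ?_ ?_ ?_ ?_ ?_
  · rintro ⟨⟨a, x⟩, ⟨b, y⟩⟩ hp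
    simp only [mem_filter, mem_divisorQuads] at hp
    obtain ⟨⟨rfl, ha, hx, hb, -⟩, rfl⟩ := hp
    simp only [mem_sigma, Nat.mem_divisors, mem_Ico]
    exact ⟨⟨⟨x, by ring⟩, by positivity⟩, by omega, by omega⟩
  · rintro ⟨e, a⟩ hq
    simp only [mem_sigma, Nat.mem_divisors, mem_Ico] at hq
    obtain ⟨⟨⟨x, rfl⟩, hn⟩, ha, hae⟩ := hq
    have he : e ≠ 0 := by omega
    simp only [mem_filter, mem_divisorQuads, Nat.mul_div_cancel_left x (Nat.pos_of_ne_zero he)]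
    refine ⟨⟨?_, by omega, right_ne_zero_of_mul hn, by omega, right_ne_zero_of_mul hn⟩, trivial⟩
    rw [← add_mul, Nat.add_sub_cancel' hae.le]
  · rintro ⟨⟨a, x⟩, ⟨b, y⟩⟩ hp
    simp only [mem_filter, mem_divisorQuads] at hp
    obtain ⟨⟨rfl, ha, hx, hb, -⟩, rfl⟩ := hp
    simp [← add_mul, Nat.mul_div_cancel_left x (show 0 < a + b by omega)]
  · rintro ⟨e, a⟩ hq
    simp only [mem_sigma, Nat.mem_divisors, mem_Ico] at hq
    simp [Nat.add_sub_cancel' hq.2.2.le]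
  · rintro ⟨⟨a, x⟩, ⟨b, y⟩⟩ -
    simp

theorem Finset.sum_trichotomy {ι M β : Type*} [AddCommMonoid M] [LinearOrder β] (s : Finset ι)
    (u v : ι → β) (f : ι → M) :
    ∑ i ∈ s, f i = ∑ i ∈ s with u i < v i, f i + ∑ i ∈ s with v i < u i, f i +
      ∑ i ∈ s with u i = v i, f i := by
  rw [← sum_filter_add_sum_filter_not s (fun i => u i < v i),
    ← sum_filter_add_sum_filter_not (s.filter fun i => ¬ u i < v i) (fun i => v i < u i),
    filter_filter, filter_filter, ← add_assoc]
  congr 2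
  · exact sum_congr (filter_congr fun i _ => by grind) fun _ _ => rfl
  · exact filter_congr fun i _ => by grind

theorem sum_divisorQuads_sub_sum_divisorQuads {M : Type*} [AddCommGroup M] (n : ℕ)
    (g h : ℕ → ℕ → M) (hgh : ∀ a b, g a b + g b a = h (a + b) b + h b (a + b)) :
    ∑ p ∈ divisorQuads n, g p.1.1 p.2.1 - ∑ p ∈ divisorQuads n, h p.1.1 p.2.1 =
      ∑ e ∈ n.divisors, ∑ a ∈ Ico 1 e, g a (e - a) -
        ∑ p ∈ divisorQuads n with p.1.1 = p.2.1, h p.1.1 p.1.1 := by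
  have hg : ∑ p ∈ divisorQuads n, g p.1.1 p.2.1 =
      ∑ p ∈ divisorQuads n with p.1.2 < p.2.2, (g p.1.1 p.2.1 + g p.2.1 p.1.1) +
        ∑ p ∈ divisorQuads n with p.1.2 = p.2.2, g p.1.1 p.2.1 := by
    rw [sum_trichotomy _ (fun p => p.1.2) (fun p => p.2.2),
      sum_divisorQuads_swap n (fun p => p.2.2 < p.1.2), sum_add_distrib]
    rfl
  have hh : ∑ p ∈ divisorQuads n, h p.1.1 p.2.1 =
      ∑ p ∈ divisorQuads n with p.1.2 < p.2.2,
          (h (p.1.1 + p.2.1) p.2.1 + h p.2.1 (p.1.1 + p.2.1)) +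
        ∑ p ∈ divisorQuads n with p.1.1 = p.2.1, h p.1.1 p.1.1 := by
    have hdiag : ∑ p ∈ divisorQuads n with p.1.1 = p.2.1, h p.1.1 p.2.1 =
        ∑ p ∈ divisorQuads n with p.1.1 = p.2.1, h p.1.1 p.1.1 :=
      sum_congr rfl fun p hp => by rw [(mem_filter.1 hp).2]
    rw [sum_trichotomy _ (fun p => p.1.1) (fun p => p.2.1), hdiag,
      sum_divisorQuads_swap n (fun p => p.1.1 < p.2.1), sum_add_distrib, sum_divisorQuads_shear]
    simp only [Prod.fst_swap, Prod.snd_swap]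
    rw [sum_divisorQuads_shear n (fun a b => h b a), add_comm (∑ p ∈ _ with _, h _ _)]
  rw [hg, hh, sum_congr rfl fun p _ => hgh p.1.1 p.2.1, ← sum_divisorQuads_filter_eq]
  abel

theorem sum_range_pow_two (N : ℕ) :
    ∑ a ∈ range N, (a : ℚ) ^ 2 = (2 * N ^ 3 - 3 * N ^ 2 + N) / 6 := by
  induction N with
  | zero => simp
  | succ N ih => rw [sum_range_succ, ih]; push_cast; ring

theorem sum_range_pow_three (N : ℕ) :
    ∑ a ∈ range N, (a : ℚ) ^ 3 = (N ^ 4 - 2 * N ^ 3 + N ^ 2) / 4 := by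
  induction N with
  | zero => simp
  | succ N ih => rw [sum_range_succ, ih]; push_cast; ring

theorem sum_range_pow_four (N : ℕ) :
    ∑ a ∈ range N, (a : ℚ) ^ 4 = (6 * N ^ 5 - 15 * N ^ 4 + 10 * N ^ 3 - N) / 30 := by
  induction N with
  | zero => simp
  | succ N ih => rw [sum_range_succ, ih]; push_cast; ring

theorem sum_range_pow_five (N : ℕ) :
    ∑ a ∈ range N, (a : ℚ) ^ 5 = (2 * N ^ 6 - 6 * N ^ 5 + 5 * N ^ 4 - N ^ 2) / 12 := by
  induction N with
  | zero => simp
  | succ N ih => rw [sum_range_succ, ih]; push_cast; ring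

theorem sum_range_pow_six (N : ℕ) :
    ∑ a ∈ range N, (a : ℚ) ^ 6 = (6 * N ^ 7 - 21 * N ^ 6 + 21 * N ^ 5 - 7 * N ^ 3 + N) / 42 := by
  induction N with
  | zero => simp
  | succ N ih => rw [sum_range_succ, ih]; push_cast; ring

theorem sum_range_pow_seven (N : ℕ) :
    ∑ a ∈ range N, (a : ℚ) ^ 7 =
      (3 * N ^ 8 - 12 * N ^ 7 + 14 * N ^ 6 - 7 * N ^ 4 + 2 * N ^ 2) / 24 := by
  induction N with
  | zero => simp
  | succ N ih => rw [sum_range_succ, ih]; push_cast; ring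

theorem sum_range_pow_eight (N : ℕ) :
    ∑ a ∈ range N, (a : ℚ) ^ 8 =
      (10 * N ^ 9 - 45 * N ^ 8 + 60 * N ^ 7 - 42 * N ^ 5 + 20 * N ^ 3 - 3 * N) / 90 := by
  induction N with
  | zero => simp
  | succ N ih => rw [sum_range_succ, ih]; push_cast; ring

theorem sum_range_pow_nine (N : ℕ) :
    ∑ a ∈ range N, (a : ℚ) ^ 9 =
      (2 * N ^ 10 - 10 * N ^ 9 + 15 * N ^ 8 - 14 * N ^ 6 + 10 * N ^ 4 - 3 * N ^ 2) / 20 := by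
  induction N with
  | zero => simp
  | succ N ih => rw [sum_range_succ, ih]; push_cast; ring

theorem sum_range_pow_ten (N : ℕ) :
    ∑ a ∈ range N, (a : ℚ) ^ 10 =
      (6 * N ^ 11 - 33 * N ^ 10 + 55 * N ^ 9 - 66 * N ^ 7 + 66 * N ^ 5 - 33 * N ^ 3 + 5 * N) /
        66 := by
  induction N with
  | zero => simp
  | succ N ih => rw [sum_range_succ, ih]; push_cast; ring

theorem sum_Ico_pow_mul_sub_pow (e i j : ℕ) (hi : i ≠ 0) :
    ∑ a ∈ Ico 1 e, (a : ℚ) ^ i * ((e - a : ℕ) : ℚ) ^ j =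
      ∑ k ∈ range (j + 1),
        (-1) ^ k * j.choose k * (e : ℚ) ^ (j - k) * ∑ a ∈ range e, (a : ℚ) ^ (i + k) := by
  have hIco : ∑ a ∈ Ico 1 e, (a : ℚ) ^ i * ((e - a : ℕ) : ℚ) ^ j =
      ∑ a ∈ range e, (a : ℚ) ^ i * ((e : ℚ) - a) ^ j := by
    rcases e.eq_zero_or_pos with rfl | he
    · simp
    rw [range_eq_Ico, sum_eq_sum_Ico_succ_bot he]
    simp only [Nat.cast_zero, zero_pow hi, zero_mul, zero_add]
    exact sum_congr rfl fun a ha => by rw [Nat.cast_sub (mem_Ico.1 ha).2.le]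
  simp_rw [hIco, mul_sum]
  rw [sum_comm]
  refine sum_congr rfl fun a _ => ?_
  rw [sub_eq_neg_add, add_pow, mul_sum]
  refine sum_congr rfl fun k _ => ?_
  rw [neg_pow, pow_add]
  ring

theorem sum_divisorQuads_pow_three_mul_pow_three (n : ℕ) :
    120 * ∑ p ∈ divisorQuads n, (p.1.1 : ℚ) ^ 3 * (p.2.1 : ℚ) ^ 3 =
      ∑ e ∈ n.divisors, ((e : ℚ) ^ 7 - e ^ 3) := by
  -- `h` is `g` with the terms of odd exponent negated: `g - h` isolates those terms, `h` vanishes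
  -- on the diagonal `a = b`, and the functional equation is a polynomial identity.
  have key := sum_divisorQuads_sub_sum_divisorQuads n
    (fun a b => (a : ℚ) ^ 2 * (b : ℚ) ^ 4 + (a : ℚ) ^ 3 * (b : ℚ) ^ 3)
    (fun a b => (a : ℚ) ^ 2 * (b : ℚ) ^ 4 - (a : ℚ) ^ 3 * (b : ℚ) ^ 3)
    (fun a b => by push_cast; ring)
  have inner (e : ℕ) : ∑ a ∈ Ico 1 e,
      ((a : ℚ) ^ 2 * ((e - a : ℕ) : ℚ) ^ 4 + (a : ℚ) ^ 3 * ((e - a : ℕ) : ℚ) ^ 3) =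
        ((e : ℚ) ^ 7 - e ^ 3) / 60 := by
    simp only [sum_add_distrib, sum_Ico_pow_mul_sub_pow, ne_eq, OfNat.ofNat_ne_zero,
      not_false_eq_true, sum_range_succ, sum_range_zero, Nat.choose, Nat.reduceAdd, Nat.reduceSub,
      sum_range_pow_two, sum_range_pow_three, sum_range_pow_four, sum_range_pow_five,
      sum_range_pow_six]
    ring
  have diag : ∑ p ∈ divisorQuads n with p.1.1 = p.2.1,
      ((p.1.1 : ℚ) ^ 2 * (p.1.1 : ℚ) ^ 4 - (p.1.1 : ℚ) ^ 3 * (p.1.1 : ℚ) ^ 3) = 0 :=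
    sum_eq_zero fun _ _ => by ring
  simp only [inner, diag, sub_zero, ← sum_sub_distrib, ← sum_div] at key
  rw [eq_div_iff (by norm_num)] at key
  rw [← key, sum_mul, mul_sum]
  exact sum_congr rfl fun _ _ => by ring

theorem sum_divisorQuads_weight_twelve (n : ℕ) :
    10080 * ∑ p ∈ divisorQuads n, (p.1.1 : ℚ) ^ 3 * (p.2.1 : ℚ) ^ 7 +
      12600 * ∑ p ∈ divisorQuads n, (p.1.1 : ℚ) ^ 5 * (p.2.1 : ℚ) ^ 5 =
      ∑ e ∈ n.divisors, (13 * (e : ℚ) ^ 11 - 42 * e ^ 7 + 50 * e ^ 5 - 21 * e ^ 3) := by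
  have key := sum_divisorQuads_sub_sum_divisorQuads n
    (fun a b => 10 * ((a : ℚ) ^ 2 * (b : ℚ) ^ 8) + 40 * ((a : ℚ) ^ 3 * (b : ℚ) ^ 7) +
      80 * ((a : ℚ) ^ 4 * (b : ℚ) ^ 6) + 50 * ((a : ℚ) ^ 5 * (b : ℚ) ^ 5))
    (fun a b => 10 * ((a : ℚ) ^ 2 * (b : ℚ) ^ 8) - 40 * ((a : ℚ) ^ 3 * (b : ℚ) ^ 7) +
      80 * ((a : ℚ) ^ 4 * (b : ℚ) ^ 6) - 50 * ((a : ℚ) ^ 5 * (b : ℚ) ^ 5))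
    (fun a b => by push_cast; ring)
  have inner (e : ℕ) : ∑ a ∈ Ico 1 e,
      (10 * ((a : ℚ) ^ 2 * ((e - a : ℕ) : ℚ) ^ 8) + 40 * ((a : ℚ) ^ 3 * ((e - a : ℕ) : ℚ) ^ 7) +
        80 * ((a : ℚ) ^ 4 * ((e - a : ℕ) : ℚ) ^ 6) + 50 * ((a : ℚ) ^ 5 * ((e - a : ℕ) : ℚ) ^ 5)) =
        (13 * (e : ℚ) ^ 11 - 42 * e ^ 7 + 50 * e ^ 5 - 21 * e ^ 3) / 126 := by
    simp only [sum_add_distrib, ← mul_sum, sum_Ico_pow_mul_sub_pow, ne_eq, OfNat.ofNat_ne_zero,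
      not_false_eq_true, sum_range_succ, sum_range_zero, Nat.choose, Nat.reduceAdd, Nat.reduceSub,
      sum_range_pow_two, sum_range_pow_three, sum_range_pow_four, sum_range_pow_five,
      sum_range_pow_six, sum_range_pow_seven, sum_range_pow_eight, sum_range_pow_nine,
      sum_range_pow_ten]
    ring
  have diag : ∑ p ∈ divisorQuads n with p.1.1 = p.2.1,
      (10 * ((p.1.1 : ℚ) ^ 2 * (p.1.1 : ℚ) ^ 8) - 40 * ((p.1.1 : ℚ) ^ 3 * (p.1.1 : ℚ) ^ 7) +
        80 * ((p.1.1 : ℚ) ^ 4 * (p.1.1 : ℚ) ^ 6) - 50 * ((p.1.1 : ℚ) ^ 5 * (p.1.1 : ℚ) ^ 5)) = 0 :=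
    sum_eq_zero fun _ _ => by ring
  simp only [inner, diag, sub_zero, ← sum_sub_distrib, ← sum_div] at key
  rw [eq_div_iff (by norm_num)] at key
  rw [← key, sum_mul, mul_sum, mul_sum, ← sum_add_distrib]
  exact sum_congr rfl fun _ _ => by ring

theorem coeff_ofNat_mul {R : Type*} [Semiring R] (c : ℕ) [c.AtLeastTwo] (f : R⟦X⟧) (n : ℕ) :
    coeff n ((no_index (OfNat.ofNat c : R⟦X⟧)) * f) = OfNat.ofNat c * coeff n f := by
  rw [← map_ofNat (C (R := R)) c, coeff_C_mul]

theorem E4_eq : E4 = 1 + 240 * sigmaSeries 3 := by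
  ext n
  rw [E4, coeff_mk, map_add, coeff_one, coeff_ofNat_mul, coeff_sigmaSeries]
  split_ifs with hn <;> simp [hn]

theorem E6_eq : E6 = 1 - 504 * sigmaSeries 5 := by
  ext n
  rw [E6, coeff_mk, map_sub, coeff_one, coeff_ofNat_mul, coeff_sigmaSeries]
  split_ifs with hn <;> simp [hn]

theorem E12_eq : 691 * E12 = 691 + 65520 * sigmaSeries 11 := by
  ext n
  rw [coeff_ofNat_mul, E12, coeff_mk, map_add, ← map_ofNat C, coeff_C, coeff_ofNat_mul,
    coeff_sigmaSeries]
  split_ifs with hn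
  · simp [hn]
  · ring

theorem sigmaSeries_three_mul_self :
    120 * (sigmaSeries 3 * sigmaSeries 3) = sigmaSeries 7 - sigmaSeries 3 := by
  ext n
  rw [coeff_ofNat_mul, coeff_sigmaSeries_mul, map_sub, coeff_sigmaSeries, coeff_sigmaSeries,
    ← sum_sub_distrib, sum_divisorQuads_pow_three_mul_pow_three]

theorem sigmaSeries_weight_twelve :
    10080 * (sigmaSeries 3 * sigmaSeries 7) + 12600 * (sigmaSeries 5 * sigmaSeries 5) =
      13 * sigmaSeries 11 - 42 * sigmaSeries 7 + 50 * sigmaSeries 5 - 21 * sigmaSeries 3 := by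
  ext n
  simp only [map_add, map_sub, coeff_ofNat_mul, coeff_sigmaSeries_mul]
  rw [sum_divisorQuads_weight_twelve]
  simp only [coeff_sigmaSeries, mul_sum, ← sum_add_distrib, ← sum_sub_distrib]

/-- In `ℚ[[q]]`, `691 E₁₂ = 441 E₄³ + 250 E₆²`. -/
theorem e12_relation : 691 * E12 = 441 * E4 ^ 3 + 250 * E6 ^ 2 := by
  rw [E4_eq, E6_eq]
  linear_combination E12_eq - (50803200 * sigmaSeries 3 + 211680) * sigmaSeries_three_mul_self -
    5040 * sigmaSeries_weight_twelve
end
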